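/- arXiv:math/0610302 — 4 statements merged into one kernel-verified Lean document; each statement's English description precedes it below -/
import Mathlib

section
/- For any real number β with cos(β) ≠ 1 and cos(kβ) ≠ 1 for the relevant indices, setting b_k = (1 - cos(β))/(1 - cos(kβ)), the recursion b_{k-1} · (b_k - 1)² · b_{k+1} - b_k² = 0 holds. -/
/-!
Write `u k = 1 - cos (k β)`, so that `b k = u 1 / u k`. After clearing denominators the recursion
becomes `(u 1 - u k)² = u (k - 1) * u (k + 1)`, which is the product formula
`(cos x - cos y)² = (1 - cos (x - y)) (1 - cos (x + y))` at `x = k β`, `y = β`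
(both sides equal `4 sin² ((x + y) / 2) sin² ((x - y) / 2)`).
-/

theorem Real.sq_cos_sub_cos (x y : ℝ) :
    (Real.cos x - Real.cos y) ^ 2 = (1 - Real.cos (x - y)) * (1 - Real.cos (x + y)) := by
  rw [Real.cos_sub, Real.cos_add]
  linear_combination (Real.sin y ^ 2) * Real.sin_sq_add_cos_sq x
    + (1 - Real.cos x ^ 2) * Real.sin_sq_add_cos_sq y

theorem div_mul_div_sub_one_sq_mul_div {K : Type*} [Field K] {a p q r : K}
    (hp : p ≠ 0) (hq : q ≠ 0) (hr : r ≠ 0) (h : (a - q) ^ 2 = p * r) :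
    a / p * (a / q - 1) ^ 2 * (a / r) = (a / q) ^ 2 := by
  field_simp
  linear_combination a ^ 2 * h

theorem stmt_1_general (β : ℝ)
    (b : ℤ → ℝ) (hb : ∀ k : ℤ, b k = (1 - Real.cos β) / (1 - Real.cos (k * β)))
    (k : ℤ)
    (h1 : Real.cos ((k - 1) * β) ≠ 1)
    (h2 : Real.cos (k * β) ≠ 1)
    (h3 : Real.cos ((k + 1) * β) ≠ 1) :
    b (k - 1) * (b k - 1) ^ 2 * b (k + 1) - b k ^ 2 = 0 := by
  have hprod : (1 - Real.cos β - (1 - Real.cos (k * β))) ^ 2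
      = (1 - Real.cos ((k - 1) * β)) * (1 - Real.cos ((k + 1) * β)) := by
    rw [show ((k : ℝ) - 1) * β = k * β - β by ring, show ((k : ℝ) + 1) * β = k * β + β by ring,
      ← Real.sq_cos_sub_cos]
    ring
  rw [sub_eq_zero, hb, hb, hb]
  push_cast
  exact div_mul_div_sub_one_sq_mul_div (sub_ne_zero.mpr h1.symm) (sub_ne_zero.mpr h2.symm)
    (sub_ne_zero.mpr h3.symm) hprod

theorem stmt_1 (β : ℝ) (hβ : Real.cos β ≠ 1)
    (b : ℤ → ℝ) (hb : ∀ k : ℤ, b k = (1 - Real.cos β) / (1 - Real.cos (k * β)))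
    (k : ℤ)
    (h1 : Real.cos ((k - 1) * β) ≠ 1)
    (h2 : Real.cos (k * β) ≠ 1)
    (h3 : Real.cos ((k + 1) * β) ≠ 1) :
    b (k - 1) * (b k - 1) ^ 2 * b (k + 1) - b k ^ 2 = 0 :=
  stmt_1_general β b hb k h1 h2 h3
end

section
/- If a_k = (1 - cos(kβ))/(1 - cos β) with β = 2π/(N+2) for an integer N ≥ 2, then a_1 = 1, a_{N+1} = 1, and a_k > 1 for all k with 2 ≤ k ≤ N. -/
theorem stmt_2 (N : ℕ) (hN : 2 ≤ N) (β : ℝ) (hβ : β = 2 * Real.pi / (N + 2))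
    (a : ℕ → ℝ) (ha : ∀ k : ℕ, a k = (1 - Real.cos (k * β)) / (1 - Real.cos β)) :
    a 1 = 1 ∧ a (N + 1) = 1 ∧ ∀ k : ℕ, 2 ≤ k → k ≤ N → 1 < a k := by
  have hN2 : (2:ℝ) ≤ (N:ℝ) := by exact_mod_cast hN
  have hpos : (0:ℝ) < (N:ℝ) + 2 := by linarith
  have hβpos : 0 < β := by
    rw [hβ]; positivity
  have hβle : β ≤ Real.pi / 2 := by
    rw [hβ]
    rw [div_le_div_iff₀ hpos (by norm_num : (0:ℝ) < 2)]
    nlinarith [Real.pi_pos]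
  have hβltpi : β < Real.pi := by
    have := Real.pi_pos; linarith
  have key : ((N:ℝ) + 2) * β = 2 * Real.pi := by
    rw [hβ]; field_simp
  have hcosβ : Real.cos β < 1 := by
    have := Real.cos_lt_cos_of_nonneg_of_le_pi (le_refl 0) (le_of_lt hβltpi) hβpos
    simpa using this
  have hden : 0 < 1 - Real.cos β := by linarith
  refine ⟨?_, ?_, ?_⟩
  · rw [ha]; push_cast; rw [one_mul, div_self (ne_of_gt hden)]
  · rw [ha]
    have h1 : ((N:ℝ) + 1) * β = 2 * Real.pi - β := by nlinarith [key]
    push_cast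
    rw [h1, Real.cos_two_pi_sub, div_self (ne_of_gt hden)]
  · intro k hk2 hkN
    have hk2' : (2:ℝ) ≤ (k:ℝ) := by exact_mod_cast hk2
    have hkN' : (k:ℝ) ≤ (N:ℝ) := by exact_mod_cast hkN
    have hx1 : β < (k:ℝ) * β := by nlinarith
    have hx2 : (k:ℝ) * β ≤ 2 * Real.pi - 2 * β := by nlinarith
    have hcos : Real.cos ((k:ℝ) * β) < Real.cos β := by
      rcases le_or_gt ((k:ℝ) * β) Real.pi with h | h
      · exact Real.cos_lt_cos_of_nonneg_of_le_pi (le_of_lt hβpos) h hx1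
      · have h2 : Real.cos (2 * Real.pi - (k:ℝ) * β) < Real.cos β := by
          apply Real.cos_lt_cos_of_nonneg_of_le_pi (le_of_lt hβpos)
          · linarith
          · linarith
        rwa [Real.cos_two_pi_sub] at h2
    rw [ha, lt_div_iff₀ hden]
    linarith
end

section
/- For a fixed integer N ≥ 1, the set of complex solutions (a_1, ..., a_{N+1}) to the system of equations a_{k-1} a_{k+1} = (1 - a_k)² for 2 ≤ k ≤ N, with boundary conditions a_1 = 1 and a_{N+1} = 1, and with all a_k ≠ 0, is finite. -/
/-!
Write the unknowns as `a 0, …, a N` (so `a i` is the paper's `a_{i+1}`) and pick `t` with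
`t ^ 2 = a 1`. The Chebyshev-type polynomials `S n` (`S (n + 2) = X * S (n + 1) - S n`) satisfy the
Cassini identity `S n * S (n + 2) = S (n + 1) ^ 2 - 1`, so `k ↦ (S k).eval t ^ 2` solves the
recurrence `a (k - 2) * a k = (1 - a (k - 1)) ^ 2` with the same first two terms `1, t ^ 2`. As all
`a k` are nonzero, the recurrence determines the solution from these two terms, hence
`a k = (S k).eval t ^ 2`. The boundary condition `a N = 1` then makes `t` a root of `S N ^ 2 - 1`,
which is a nonzero polynomial since `S N` takes the value `N + 1` at `2`.
-/

open Polynomial Polynomial.Chebyshev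

namespace Polynomial.Chebyshev

variable (R : Type*) [CommRing R]

theorem S_mul_S_add_two (n : ℤ) : S R n * S R (n + 2) = S R (n + 1) ^ 2 - 1 := by
  rw [S_add_two]
  linear_combination -S_sq_add_S_sq R n

theorem sq_eval_S_mul_sq_eval_S_add_two (t : R) (n : ℤ) :
    (S R n).eval t ^ 2 * (S R (n + 2)).eval t ^ 2 = (1 - (S R (n + 1)).eval t ^ 2) ^ 2 := by
  have h := congrArg (eval t) (S_mul_S_add_two R n)
  simp only [eval_mul, eval_sub, eval_pow, eval_one] at h
  linear_combination ((S R n).eval t * (S R (n + 2)).eval t + (S R (n + 1)).eval t ^ 2 - 1) * h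

theorem S_sq_sub_one_ne_zero [CharZero R] {n : ℕ} (hn : n ≠ 0) : S R n ^ 2 - 1 ≠ 0 := by
  intro h
  have h2 := congrArg (eval 2) h
  simp only [eval_sub, eval_pow, eval_one, eval_zero, S_eval_two, Int.cast_natCast] at h2
  have hcast : ((n * (n + 2) : ℕ) : R) ≠ 0 := Nat.cast_ne_zero.mpr (by simp [hn])
  apply hcast
  push_cast
  linear_combination h2

end Polynomial.Chebyshev

theorem eq_of_mul_eq_one_sub_sq {K : Type*} [Field K] {N : ℕ} {a : Fin (N + 1) → K}
    {c : ℕ → K} (ha : ∀ i, a i ≠ 0)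
    (hrec : ∀ k : ℕ, 2 ≤ k → (hk : k ≤ N) →
      a ⟨k - 2, Nat.lt_succ_of_le ((k.sub_le 2).trans hk)⟩ * a ⟨k, Nat.lt_succ_of_le hk⟩ =
        (1 - a ⟨k - 1, Nat.lt_succ_of_le ((k.sub_le 1).trans hk)⟩) ^ 2)
    (hc : ∀ k, c k * c (k + 2) = (1 - c (k + 1)) ^ 2)
    (h0 : a ⟨0, N.succ_pos⟩ = c 0) (h1 : ∀ h : 1 ≤ N, a ⟨1, Nat.succ_lt_succ h⟩ = c 1)
    (i : Fin (N + 1)) :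
    a i = c i := by
  obtain ⟨k, hk⟩ := i
  induction k using Nat.strong_induction_on with
  | _ k ih =>
    match k, hk with
    | 0, _ => exact h0
    | 1, hk => exact h1 (by omega)
    | m + 2, hk =>
      have hm : a ⟨m, by omega⟩ = c m := ih m (by omega) _
      have hm1 : a ⟨m + 1, by omega⟩ = c (m + 1) := ih (m + 1) (by omega) _
      have ha_rec : a ⟨m, _⟩ * a ⟨m + 2, hk⟩ = (1 - a ⟨m + 1, _⟩) ^ 2 :=
        hrec (m + 2) (by omega) (by omega)
      rw [hm, hm1, ← hc m] at ha_rec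
      exact mul_left_cancel₀ (hm ▸ ha _) ha_rec

theorem stmt_5 (N : ℕ) (hN : 1 ≤ N) :
    Set.Finite {a : Fin (N + 1) → ℂ |
      a ⟨0, by omega⟩ = 1 ∧ a ⟨N, by omega⟩ = 1 ∧ (∀ i, a i ≠ 0) ∧
      ∀ k : ℕ, (h2 : 2 ≤ k) → (hk : k ≤ N) →
        a ⟨k - 2, by omega⟩ * a ⟨k, by omega⟩ = (1 - a ⟨k - 1, by omega⟩) ^ 2} := by
  refine ((finite_setOfPred_isRoot (S_sq_sub_one_ne_zero ℂ (n := N) (by omega))).image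
    fun t (i : Fin (N + 1)) => (S ℂ i).eval t ^ 2).subset ?_
  rintro a ⟨ha0, haN, hne, hrec⟩
  obtain ⟨t, ht⟩ := IsAlgClosed.exists_pow_nat_eq (a ⟨1, by omega⟩) two_pos
  have hsol : ∀ i, a i = (S ℂ i).eval t ^ 2 := by
    refine eq_of_mul_eq_one_sub_sq (c := fun k => (S ℂ k).eval t ^ 2) hne hrec (fun k => ?_)
      (ha0.trans (by simp)) (fun _ => by simp [ht])
    exact_mod_cast sq_eval_S_mul_sq_eval_S_add_two ℂ t k
  refine ⟨t, ?_, funext fun i => (hsol i).symm⟩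
  have haN_eq := hsol ⟨N, by omega⟩
  simp only [Set.mem_ofPred_eq, IsRoot, eval_sub, eval_pow, eval_one]
  rw [← haN_eq, haN, sub_self]
end

section
/- Suppose complex numbers a, b, c, d, ă, φ, ψ satisfy: a = -c, b = -a²φ, d = ă²/ψ, c² = -bd, and c = -2d - ă, with φ, ψ ≠ 0, c ≠ 0, ă ≠ 0. Then ă² = ψ/φ, d = 1/φ, and a = -c = √(ψ/φ)·(1 ± 2/√(φψ)) for a suitable choice of square roots; moreover for at least one choice of sign of ă, all of a, b, c, d, ă are nonzero. -/
theorem stmt_18 (a b c d aCheck φ ψ : ℂ)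
    (h1 : a = -c) (h3 : b = -a ^ 2 * φ) (h4 : d = aCheck ^ 2 / ψ)
    (h5 : c ^ 2 = -b * d) (h6 : c = -2 * d - aCheck)
    (hφ : φ ≠ 0) (hψ : ψ ≠ 0) (hc : c ≠ 0) (haCheck : aCheck ≠ 0) :
    aCheck ^ 2 = ψ / φ ∧ d = 1 / φ ∧
    (∃ s : ℂ, s ^ 2 = φ * ψ ∧ a = aCheck * (1 + 2 / s)) ∧
    (∃ aCheck' : ℂ, aCheck' ^ 2 = ψ / φ ∧ aCheck' ≠ 0 ∧
      -(2 * (1 / φ)) - aCheck' ≠ 0 ∧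
      -(-(2 * (1 / φ)) - aCheck') ≠ 0 ∧
      -(-(-(2 * (1 / φ)) - aCheck')) ^ 2 * φ ≠ 0 ∧
      (1 : ℂ) / φ ≠ 0) := by
  have hc2 : c ^ 2 ≠ 0 := pow_ne_zero 2 hc
  have e : c ^ 2 * ψ = c ^ 2 * (φ * aCheck ^ 2) := by
    have : c ^ 2 * ψ = (-b * d) * ψ := by rw [← h5]
    rw [h3, h4, h1] at this
    field_simp at this
    rw [this]
  have key2 : ψ = φ * aCheck ^ 2 := mul_left_cancel₀ hc2 e
  have key : aCheck ^ 2 = ψ / φ := by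
    rw [eq_div_iff hφ]; linear_combination -key2
  have hd : d = 1 / φ := by
    rw [h4, key]; field_simp
  have h10 : (1 : ℂ) / φ ≠ 0 := one_div_ne_zero hφ
  have h4φ : (4 : ℂ) / φ ≠ 0 := div_ne_zero (by norm_num) hφ
  refine ⟨key, hd, ⟨aCheck * φ, ?_, ?_⟩, ?_⟩
  · linear_combination -φ * key2
  · rw [h1, h6, hd]
    field_simp
    ring
  · by_cases hca : -(2 * (1 / φ)) - aCheck = 0
    · refine ⟨-aCheck, by rw [neg_pow]; simp [key], neg_ne_zero.mpr haCheck, ?_, ?_, ?_, h10⟩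
      · intro h
        exact h4φ (by linear_combination -hca - h)
      · intro h
        exact h4φ (by linear_combination -hca + h)
      · refine mul_ne_zero (neg_ne_zero.mpr (pow_ne_zero 2 ?_)) hφ
        intro h
        exact h4φ (by linear_combination -hca + h)
    · exact ⟨aCheck, key, haCheck, hca, neg_ne_zero.mpr hca,
        mul_ne_zero (neg_ne_zero.mpr (pow_ne_zero 2 (neg_ne_zero.mpr hca))) hφ, h10⟩
end
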